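/- Let V, φ : ℝ² → ℝ be twice continuously differentiable, let D > 0, Z > 0, let ρ_s(x) = Z⁻¹ exp(−V(x)/D), and let u₂ ∈ ℝ be a constant. Then for every x ∈ ℝ², ∇·( ρ_s(x)·( ∇V(x) + u₂·ρ_s(x)⁻¹·∇⊥φ(x) ) ) + D·Δρ_s(x) = 0. Hence ρ_s remains a stationary distribution of the controlled Fokker–Planck equation ∂_tρ = ∇·(ρ(∇V + u₁∇α + u₂ρ_s⁻¹∇⊥φ)) + DΔρ when u₁ = 0 and u₂ is constant. -/

import Mathlib

open Real MeasureTheory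

/-- Partial derivative in the `x` direction. -/
noncomputable def pdx (f : ℝ × ℝ → ℝ) (p : ℝ × ℝ) : ℝ := fderiv ℝ f p (1, 0)

/-- Partial derivative in the `y` direction. -/
noncomputable def pdy (f : ℝ × ℝ → ℝ) (p : ℝ × ℝ) : ℝ := fderiv ℝ f p (0, 1)

/-- Gradient of a scalar field on `ℝ²`. -/
noncomputable def grad (f : ℝ × ℝ → ℝ) (p : ℝ × ℝ) : ℝ × ℝ := (pdx f p, pdy f p)

/-- Perpendicular gradient `∇⊥f = (∂_y f, -∂_x f)`. -/
noncomputable def gradPerp (f : ℝ × ℝ → ℝ) (p : ℝ × ℝ) : ℝ × ℝ := (pdy f p, -pdx f p)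

/-- Divergence of a vector field on `ℝ²`. -/
noncomputable def div2 (F : ℝ × ℝ → ℝ × ℝ) (p : ℝ × ℝ) : ℝ :=
  pdx (fun q => (F q).1) p + pdy (fun q => (F q).2) p

/-- Laplacian of a scalar field on `ℝ²`. -/
noncomputable def lap (f : ℝ × ℝ → ℝ) (p : ℝ × ℝ) : ℝ := pdx (pdx f) p + pdy (pdy f) p

/-- Scalar curl (flux rotation) of a vector field on `ℝ²`. -/
noncomputable def curl2 (F : ℝ × ℝ → ℝ × ℝ) (p : ℝ × ℝ) : ℝ :=
  pdx (fun q => (F q).2) p - pdy (fun q => (F q).1) p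

/-! The Gibbs density satisfies detailed balance, `ρ_s ∇V = -D ∇ρ_s`, so the gradient part of the
flux cancels the diffusion term `D Δρ_s`. The control part `ρ_s · ρ_s⁻¹ ∇⊥φ = ∇⊥φ` is
divergence-free because the mixed second partial derivatives of `φ` agree. -/

section IteratedFDeriv

variable {E F : Type*} [NormedAddCommGroup E] [NormedSpace ℝ E]
  [NormedAddCommGroup F] [NormedSpace ℝ F] {f : E → F}

lemma fderiv_fderiv_apply_const {p : E} (hf : DifferentiableAt ℝ (fderiv ℝ f) p) (v w : E) :
    fderiv ℝ (fun q => fderiv ℝ f q v) p w = fderiv ℝ (fderiv ℝ f) p w v := by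
  simp [fderiv_clm_apply hf (differentiableAt_const v)]

lemma ContDiff.differentiable_fderiv_apply_const (hf : ContDiff ℝ 2 f) (v : E) :
    Differentiable ℝ (fun q => fderiv ℝ f q v) :=
  ((hf.fderiv_right (m := 1) (by norm_num)).differentiable one_ne_zero).clm_apply
    (differentiable_const v)

end IteratedFDeriv

section PlaneCalculus

variable {f : ℝ × ℝ → ℝ}

lemma ContDiff.differentiable_pdx (hf : ContDiff ℝ 2 f) : Differentiable ℝ (pdx f) :=
  hf.differentiable_fderiv_apply_const (1, 0)

lemma ContDiff.differentiable_pdy (hf : ContDiff ℝ 2 f) : Differentiable ℝ (pdy f) :=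
  hf.differentiable_fderiv_apply_const (0, 1)

lemma ContDiff.differentiable_grad (hf : ContDiff ℝ 2 f) : Differentiable ℝ (grad f) :=
  hf.differentiable_pdx.prodMk hf.differentiable_pdy

lemma ContDiff.differentiable_gradPerp (hf : ContDiff ℝ 2 f) : Differentiable ℝ (gradPerp f) :=
  hf.differentiable_pdy.prodMk hf.differentiable_pdx.neg

lemma pdx_pdy_comm (hf : ContDiff ℝ 2 f) (p : ℝ × ℝ) : pdx (pdy f) p = pdy (pdx f) p := by
  have hf' : DifferentiableAt ℝ (fderiv ℝ f) p :=
    (hf.fderiv_right (m := 1) (by norm_num)).differentiable one_ne_zero p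
  change fderiv ℝ (fun q => fderiv ℝ f q (0, 1)) p (1, 0)
    = fderiv ℝ (fun q => fderiv ℝ f q (1, 0)) p (0, 1)
  rw [fderiv_fderiv_apply_const hf', fderiv_fderiv_apply_const hf']
  exact (hf.contDiffAt.isSymmSndFDerivAt (by simp)) _ _

lemma div2_smul_add_smul {F G : ℝ × ℝ → ℝ × ℝ} {p : ℝ × ℝ} (hF : DifferentiableAt ℝ F p)
    (hG : DifferentiableAt ℝ G p) (a b : ℝ) :
    div2 (fun q => a • F q + b • G q) p = a * div2 F p + b * div2 G p := by
  simp only [div2, pdx, pdy, Prod.fst_add, Prod.snd_add, Prod.smul_fst, Prod.smul_snd,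
    smul_eq_mul]
  rw [fderiv_fun_add (hF.fst.const_mul a) (hG.fst.const_mul b),
    fderiv_fun_add (hF.snd.const_mul a) (hG.snd.const_mul b),
    fderiv_const_mul hF.fst, fderiv_const_mul hG.fst, fderiv_const_mul hF.snd,
    fderiv_const_mul hG.snd]
  simp only [add_apply, smul_apply, smul_eq_mul]
  ring

lemma div2_grad (p : ℝ × ℝ) : div2 (grad f) p = lap f p := rfl

lemma div2_gradPerp (hf : ContDiff ℝ 2 f) (p : ℝ × ℝ) : div2 (gradPerp f) p = 0 := by
  have hneg : pdy (fun q => -pdx f q) p = -pdy (pdx f) p := by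
    simp only [pdy, fderiv_fun_neg, neg_apply]
  simp only [div2, gradPerp, hneg, pdx_pdy_comm hf, add_neg_cancel]

end PlaneCalculus

section Gibbs

variable {E : Type*}

noncomputable def gibbsDensity (V : E → ℝ) (D Z : ℝ) (x : E) : ℝ :=
  Z⁻¹ * Real.exp (-V x / D)

variable {V : E → ℝ} {D Z : ℝ}

lemma gibbsDensity_pos (hZ : 0 < Z) (x : E) : 0 < gibbsDensity V D Z x :=
  mul_pos (inv_pos.mpr hZ) (Real.exp_pos _)

variable [NormedAddCommGroup E] [NormedSpace ℝ E]

lemma contDiff_gibbsDensity {n : WithTop ℕ∞} (hV : ContDiff ℝ n V) :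
    ContDiff ℝ n (gibbsDensity V D Z) :=
  contDiff_const.mul (Real.contDiff_exp.comp (hV.neg.div_const D))

lemma hasFDerivAt_gibbsDensity {V' : E →L[ℝ] ℝ} {x : E} (hV : HasFDerivAt V V' x) :
    HasFDerivAt (gibbsDensity V D Z) (-(gibbsDensity V D Z x / D) • V') x := by
  have hfun : gibbsDensity V D Z = fun y => Z⁻¹ * Real.exp (-D⁻¹ * V y) := by
    funext y
    rw [gibbsDensity, neg_div, div_eq_inv_mul, neg_mul]
  rw [hfun]
  refine ((hV.const_mul (-D⁻¹)).exp.const_mul Z⁻¹).congr_fderiv ?_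
  rw [smul_smul, smul_smul]
  congr 1
  ring

end Gibbs

lemma gibbsDensity_smul_grad {V : ℝ × ℝ → ℝ} {D : ℝ} (Z : ℝ) {p : ℝ × ℝ}
    (hV : DifferentiableAt ℝ V p) (hD : D ≠ 0) :
    gibbsDensity V D Z p • grad V p = (-D) • grad (gibbsDensity V D Z) p := by
  simp only [grad, pdx, pdy, (hasFDerivAt_gibbsDensity hV.hasFDerivAt).fderiv, Prod.smul_mk,
    smul_apply, smul_eq_mul]
  field_simp

/-- With `u₁ = 0` and constant `u₂`, the Gibbs density `ρ_s` remains a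
stationary distribution of the controlled Fokker–Planck equation:
`∇·(ρ_s (∇V + u₂ ρ_s⁻¹ ∇⊥φ)) + D Δρ_s = 0`. -/
theorem gibbs_density_stationary_controlled
    (V φ : ℝ × ℝ → ℝ) (hV : ContDiff ℝ 2 V) (hφ : ContDiff ℝ 2 φ)
    (D Z : ℝ) (hD : 0 < D) (hZ : 0 < Z)
    (ρs : ℝ × ℝ → ℝ) (hρs : ∀ p, ρs p = Z⁻¹ * Real.exp (-V p / D)) (u₂ : ℝ) :
    ∀ p : ℝ × ℝ,
      div2 (fun q => ρs q • (grad V q + u₂ • ((ρs q)⁻¹ • gradPerp φ q))) p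
        + D * lap ρs p = 0 := by
  intro p
  obtain rfl : ρs = gibbsDensity V D Z := funext hρs
  have hflux : (fun q => gibbsDensity V D Z q •
      (grad V q + u₂ • ((gibbsDensity V D Z q)⁻¹ • gradPerp φ q)))
      = fun q => (-D) • grad (gibbsDensity V D Z) q + u₂ • gradPerp φ q := by
    funext q
    rw [smul_add, gibbsDensity_smul_grad Z (hV.differentiable (by norm_num) q) hD.ne', smul_comm,
      smul_inv_smul₀ (gibbsDensity_pos hZ q).ne']
  rw [hflux, div2_smul_add_smul ((contDiff_gibbsDensity hV).differentiable_grad p)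
    (hφ.differentiable_gradPerp p), div2_grad, div2_gradPerp hφ]
  ring
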